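/- Let $\alpha_1,\dots,\alpha_n \in (0,1)$ with $\alpha_1+\cdots+\alpha_n < 1$ and $f_i \in \mathcal{C}^{\alpha_i}$. Let $\mathcal{W}^{<1}$ be the word regularity structure on alphabets $\{1,\dots,n\}$ with $|i| = \alpha_i$, and let $\mathsf{g}: \mathbb{R}^d \to \mathrm{ch}(\mathcal{W}^{<1})$ be the character-valued map with $\mathsf{g}_x(i_1\dots i_k) = (f_{i_1},\dots,f_{i_k})^{\prec}(x)$. Then the two-point characters satisfy $\mathsf{g}_{yx}(i_1\dots i_k) = \omega^{\prec}_{yx}(f_{i_1},\dots,f_{i_k})$, where $\mathsf{g}_{yx} = (\mathsf{g}_y \otimes \mathsf{g}_x^{-1})\Delta$. -/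

import Mathlib

noncomputable section

open MeasureTheory

/-- `d`-dimensional Euclidean space. -/
abbrev Ed (d : ℕ) := EuclideanSpace ℝ (Fin d)

/-- A dyadic Littlewood–Paley partition of unity `(χ, ρ)` on `ℝ^d`. -/
structure LPPartition (d : ℕ) where
  chi : Ed d → ℝ
  rho : Ed d → ℝ
  smooth_chi : ContDiff ℝ (⊤ : ℕ∞) chi
  smooth_rho : ContDiff ℝ (⊤ : ℕ∞) rho
  supp_chi : ∀ x : Ed d, (4 / 3 : ℝ) ≤ ‖x‖ → chi x = 0
  supp_rho : ∀ x : Ed d, ‖x‖ ≤ (3 / 4 : ℝ) ∨ (8 / 3 : ℝ) ≤ ‖x‖ → rho x = 0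
  partition : ∀ x : Ed d, chi x + ∑' j : ℕ, rho (((2 : ℝ) ^ j)⁻¹ • x) = 1

/-- The Fourier symbol of the `n`-th Littlewood–Paley block; the index `n : ℕ`
corresponds to the usual index `j = n - 1 ≥ -1`, so `n = 0` is the block `Δ_{-1}`
given by `χ` and `n = j + 1` is the block `Δ_j` given by `ρ(2^{-j}·)` for `j ≥ 0`. -/
def lpSymbol {d : ℕ} (P : LPPartition d) : ℕ → Ed d → ℝ
  | 0 => P.chi
  | n + 1 => fun x => P.rho (((2 : ℝ) ^ n)⁻¹ • x)

/-- The Littlewood–Paley block `Δ_{n-1} f = ℱ⁻¹(ρ_{n-1} ℱ f)`, realized as the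
convolution of `f` with the inverse Fourier transform of the symbol. -/
def lpBlock {d : ℕ} (P : LPPartition d) (n : ℕ) (f : Ed d → ℝ) (x : Ed d) : ℝ :=
  (∫ y : Ed d,
    FourierTransformInv.fourierInv (fun v : Ed d => (lpSymbol P n v : ℂ)) y * (f (x - y) : ℂ)).re

/-- `f` has `𝒞^α = B^α_{∞,∞}` Besov norm bounded by `M`:
`2^{jα} ‖Δ_j f‖_{L^∞} ≤ M` for all `j ≥ -1` (here `j = n - 1`). -/
def HolderBdd {d : ℕ} (P : LPPartition d) (α : ℝ) (f : Ed d → ℝ) (M : ℝ) : Prop :=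
  ∀ (n : ℕ) (x : Ed d), (2 : ℝ) ^ (((n : ℝ) - 1) * α) * |lpBlock P n f x| ≤ M

/-- `f` is the sum of its Littlewood–Paley blocks (pointwise). -/
def LPSum {d : ℕ} (P : LPPartition d) (f : Ed d → ℝ) : Prop :=
  ∀ x : Ed d, HasSum (fun n : ℕ => lpBlock P n f x) (f x)

/-- The Bony paraproduct `f ≺ g = ∑_{j < k - 1} Δ_j f Δ_k g`. -/
def para {d : ℕ} (P : LPPartition d) (f g : Ed d → ℝ) : Ed d → ℝ := fun x =>
  ∑' k : ℕ, (∑ m ∈ Finset.range (k - 1), lpBlock P m f x) * lpBlock P k g x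

/-- The iterated paraproduct `(f₁, …, f_n)^≺ = (f₁, …, f_{n-1})^≺ ≺ f_n`. -/
def iterPara {d : ℕ} (P : LPPartition d) : List (Ed d → ℝ) → Ed d → ℝ
  | [] => fun _ => 0
  | f :: fs => fs.foldl (para P) f

/-- The coherence remainder `ω_{yx}` associated with a family `F` of functions indexed
by words: `ω_{yx}(l) = F l (y) - F l (x) - ∑_{ℓ=1}^{k-1} F(l₁…l_ℓ)(x) ω_{yx}(l_{ℓ+1}…l_k)`,
defined by recursion on the length of the word (the first argument is the length). -/
def omGen {d : ℕ} {β : Type*} (F : List β → Ed d → ℝ) :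
    ℕ → List β → Ed d → Ed d → ℝ
  | 0, _, _, _ => 0
  | n + 1, l, y, x =>
      F l y - F l x -
        ∑ ℓ ∈ Finset.range n, F (l.take (ℓ + 1)) x * omGen F (n - ℓ) (l.drop (ℓ + 1)) y x
  termination_by n => n
  decreasing_by omega

end


noncomputable section

open TensorProduct

/-- Nonempty words over the alphabet `S`. -/
abbrev Wrd (S : Type) := {l : List S // l ≠ []}

/-- The word Hopf algebra `ℝ[W]`: the free commutative `ℝ`-algebra generated by the
nonempty words over `S` (the empty word being the algebra unit `1`). -/
abbrev WAlg (S : Type) := MvPolynomial (Wrd S) ℝ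

/-- A word, viewed as an element of `WAlg S`; the empty word is the unit `1`. -/
def emb {S : Type} : List S → WAlg S
  | [] => 1
  | a :: l => MvPolynomial.X ⟨a :: l, by simp⟩

/-- The deconcatenation coproduct `Δ(i₁…i_k) = ∑_{ℓ=0}^{k} (i_{ℓ+1}…i_k) ⊗ (i₁…i_ℓ)`,
extended to `WAlg S` as an algebra homomorphism. -/
def coprod (S : Type) : WAlg S →ₐ[ℝ] (WAlg S ⊗[ℝ] WAlg S) :=
  MvPolynomial.aeval fun w : Wrd S =>
    ∑ ℓ ∈ Finset.range (w.val.length + 1),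
      (emb (w.val.drop ℓ) ⊗ₜ[ℝ] emb (w.val.take ℓ) : WAlg S ⊗[ℝ] WAlg S)

/-- The counit `𝟏*`, sending the empty word to `1` and every nonempty word to `0`. -/
def counit (S : Type) : WAlg S →ₐ[ℝ] ℝ :=
  MvPolynomial.aeval fun _ : Wrd S => (0 : ℝ)

/-- Convolution product of characters: `f * g := (f ⊗ g) ∘ Δ`. -/
def convMul {S : Type} (f g : WAlg S →ₐ[ℝ] ℝ) : WAlg S →ₐ[ℝ] ℝ :=
  (Algebra.TensorProduct.productMap f g).comp (coprod S)

end

noncomputable section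

/-- The canonical character `g_x` on the word Hopf algebra over the alphabet
`{1,…,n}`, determined on words by `g_x(i₁…i_k) = (f_{i₁},…,f_{i_k})^≺(x)`. -/
def gchar {d n : ℕ} (P : LPPartition d) (f : Fin n → Ed d → ℝ) (x : Ed d) :
    WAlg (Fin n) →ₐ[ℝ] ℝ :=
  MvPolynomial.aeval fun w : Wrd (Fin n) => iterPara P (w.val.map f) x

section AuxLemmas

variable {S : Type}

lemma emb_nil : emb ([] : List S) = 1 := rfl

lemma counit_emb_ne {u : List S} (hu : u ≠ []) : counit S (emb u) = 0 := by
  cases u with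
  | nil => exact absurd rfl hu
  | cons a l => simp [emb, counit]

lemma coprod_emb (u : List S) :
    coprod S (emb u) = ∑ ℓ ∈ Finset.range (u.length + 1),
      (emb (u.drop ℓ) ⊗ₜ[ℝ] emb (u.take ℓ)) := by
  cases u with
  | nil => simp [emb, Algebra.TensorProduct.one_def]
  | cons a l => simp [emb, coprod]

lemma conv_emb (a b : WAlg S →ₐ[ℝ] ℝ) (u : List S) :
    convMul a b (emb u) = ∑ ℓ ∈ Finset.range (u.length + 1),
      a (emb (u.drop ℓ)) * b (emb (u.take ℓ)) := by
  simp [convMul, coprod_emb, map_sum]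

lemma conv_assoc_point (b c a : WAlg S →ₐ[ℝ] ℝ) (h : convMul c a = counit S)
    (u : List S) :
    ∑ ℓ ∈ Finset.range (u.length + 1),
      convMul b c (emb (u.drop ℓ)) * a (emb (u.take ℓ)) = b (emb u) := by
  rcases eq_or_ne u [] with rfl | hu
  · simp [emb_nil, map_one, conv_emb]
  · obtain ⟨k, hk⟩ : ∃ k, k = u.length := ⟨_, rfl⟩
    rw [← hk]
    have hstep1 :
        ∑ ℓ ∈ Finset.range (k + 1),
          convMul b c (emb (u.drop ℓ)) * a (emb (u.take ℓ)) =
        ∑ p ∈ (Finset.range (k + 1)).sigma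
            (fun ℓ => Finset.range (k - ℓ + 1)),
          b (emb ((u.drop p.1).drop p.2)) *
            c (emb ((u.drop p.1).take p.2)) * a (emb (u.take p.1)) := by
      rw [Finset.sum_sigma]
      refine Finset.sum_congr rfl fun ℓ hℓ => ?_
      rw [conv_emb, Finset.sum_mul]
      have hlen : (u.drop ℓ).length = k - ℓ := by rw [List.length_drop, ← hk]
      rw [hlen]
    have hstep2 :
        ∑ p ∈ (Finset.range (k + 1)).sigma
            (fun ℓ => Finset.range (k - ℓ + 1)),
          b (emb ((u.drop p.1).drop p.2)) *
            c (emb ((u.drop p.1).take p.2)) * a (emb (u.take p.1)) =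
        ∑ p ∈ (Finset.range (k + 1)).sigma (fun j => Finset.range (j + 1)),
          b (emb (u.drop p.1)) *
            (c (emb ((u.take p.1).drop p.2)) * a (emb ((u.take p.1).take p.2))) := by
      refine Finset.sum_nbij' (fun p => ⟨p.1 + p.2, p.1⟩) (fun p => ⟨p.2, p.1 - p.2⟩)
        ?_ ?_ ?_ ?_ ?_
      · rintro ⟨ℓ, m⟩ hp
        simp only [Finset.mem_sigma, Finset.mem_range] at hp ⊢
        omega
      · rintro ⟨j, ℓ⟩ hp
        simp only [Finset.mem_sigma, Finset.mem_range] at hp ⊢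
        omega
      · rintro ⟨ℓ, m⟩ hp
        simp only [Finset.mem_sigma, Finset.mem_range] at hp
        simp only [Sigma.mk.inj_iff, heq_iff_eq]
        constructor <;> first | trivial | omega
      · rintro ⟨j, ℓ⟩ hp
        simp only [Finset.mem_sigma, Finset.mem_range] at hp
        simp only [Sigma.mk.inj_iff, heq_iff_eq]
        constructor <;> first | trivial | omega
      · rintro ⟨ℓ, m⟩ hp
        simp only [Finset.mem_sigma, Finset.mem_range] at hp
        have h1 : (u.drop ℓ).drop m = u.drop (ℓ + m) := by
          rw [List.drop_drop]
        have h2 : (u.take (ℓ + m)).drop ℓ = (u.drop ℓ).take m := by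
          rw [List.drop_take]; congr 1; omega
        have h3 : (u.take (ℓ + m)).take ℓ = u.take ℓ := by
          rw [List.take_take]; congr 1; omega
        rw [h1, h2, h3]; ring
    have hstep3 :
        ∑ p ∈ (Finset.range (k + 1)).sigma (fun j => Finset.range (j + 1)),
          b (emb (u.drop p.1)) *
            (c (emb ((u.take p.1).drop p.2)) * a (emb ((u.take p.1).take p.2))) =
        ∑ j ∈ Finset.range (k + 1),
          b (emb (u.drop j)) * counit S (emb (u.take j)) := by
      rw [Finset.sum_sigma]
      refine Finset.sum_congr rfl fun j hj => ?_
      dsimp only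
      rw [← Finset.mul_sum]
      congr 1
      have hjk : j ≤ k := by
        simpa [Nat.lt_succ_iff] using Finset.mem_range.mp hj
      have hlen : (u.take j).length = j := by rw [List.length_take, ← hk]; omega
      rw [← h, conv_emb, hlen]
    have hstep4 :
        ∑ j ∈ Finset.range (k + 1),
          b (emb (u.drop j)) * counit S (emb (u.take j)) = b (emb u) := by
      rw [Finset.sum_eq_single 0]
      · simp [emb_nil, map_one]
      · intro j hj hj0
        have : u.take j ≠ [] := by
          cases u with
          | nil => exact absurd rfl hu
          | cons a l => cases j with | zero => exact absurd rfl hj0 | succ j => simp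
        rw [counit_emb_ne this, mul_zero]
      · intro h0; exact absurd (Finset.mem_range.mpr (Nat.succ_pos k)) h0
    rw [hstep1, hstep2, hstep3, hstep4]

end AuxLemmas

lemma gchar_emb {d n : ℕ} (P : LPPartition d) (f : Fin n → Ed d → ℝ) (x : Ed d)
    {u : List (Fin n)} (hu : u ≠ []) :
    gchar P f x (emb u) = iterPara P (u.map f) x := by
  cases u with
  | nil => exact absurd rfl hu
  | cons a l => simp [emb, gchar]

/-- For the canonical paraproduct model `g_x(i₁…i_k) = (f_{i₁},…,f_{i_k})^≺(x)` on the
word regularity structure (with `α_i ∈ (0,1)`, `α₁+⋯+α_n < 1`, `f_i ∈ 𝒞^{α_i}`), the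
two-point characters `g_{yx} = (g_y ⊗ g_x⁻¹)Δ` are given by the paraproduct coherence
remainders: `g_{yx}(i₁…i_k) = ω^≺_{yx}(f_{i₁},…,f_{i_k})`. -/
theorem canonical_model_two_point (d n : ℕ) (hn : 1 ≤ n) (P : LPPartition d)
    (α : Fin n → ℝ) (hα : ∀ i, α i ∈ Set.Ioo (0 : ℝ) 1) (hsum : (∑ i, α i) < 1)
    (f : Fin n → Ed d → ℝ) (M : Fin n → ℝ)
    (hf : ∀ i, HolderBdd P (α i) (f i) (M i)) (hfs : ∀ i, LPSum P (f i))
    (ginv : Ed d → (WAlg (Fin n) →ₐ[ℝ] ℝ))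
    (hinv : ∀ x : Ed d,
      convMul (gchar P f x) (ginv x) = counit (Fin n) ∧
      convMul (ginv x) (gchar P f x) = counit (Fin n))
    (y x : Ed d) (w : List (Fin n)) (hw : w ≠ []) :
    convMul (gchar P f y) (ginv x) (emb w) =
      omGen (iterPara P) w.length (w.map f) y x := by
  have hxr := (hinv x).2
  have hrec : ∀ u : List (Fin n), u ≠ [] →
      convMul (gchar P f y) (ginv x) (emb u) =
        iterPara P (u.map f) y - iterPara P (u.map f) x -
          ∑ ℓ ∈ Finset.range (u.length - 1),
            iterPara P ((u.take (ℓ + 1)).map f) x *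
              convMul (gchar P f y) (ginv x) (emb (u.drop (ℓ + 1))) := by
    intro u hu
    obtain ⟨m, hm⟩ : ∃ m, u.length = m + 1 := by
      cases u with
      | nil => exact absurd rfl hu
      | cons a l => exact ⟨l.length, rfl⟩
    have htake : ∀ ℓ : ℕ, u.take (ℓ + 1) ≠ [] := by
      intro ℓ
      cases u with
      | nil => exact absurd rfl hu
      | cons a l => simp
    have hassoc := conv_assoc_point (gchar P f y) (ginv x) (gchar P f x) hxr u
    rw [hm, Finset.sum_range_succ, Finset.sum_range_succ'] at hassoc
    have e1 : u.drop (m + 1) = [] := List.drop_eq_nil_of_le (by omega)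
    have e2 : u.take (m + 1) = u := List.take_of_length_le (by omega)
    rw [e1, e2, List.drop_zero, List.take_zero, emb_nil, map_one, map_one,
      mul_one, one_mul, gchar_emb P f y hu, gchar_emb P f x hu] at hassoc
    have hS : ∑ ℓ ∈ Finset.range m,
        convMul (gchar P f y) (ginv x) (emb (u.drop (ℓ + 1))) *
          gchar P f x (emb (u.take (ℓ + 1))) =
        ∑ ℓ ∈ Finset.range m,
          iterPara P ((u.take (ℓ + 1)).map f) x *
            convMul (gchar P f y) (ginv x) (emb (u.drop (ℓ + 1))) := by
      refine Finset.sum_congr rfl fun ℓ _ => ?_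
      rw [gchar_emb P f x (htake ℓ)]; ring
    rw [hS] at hassoc
    rw [hm]
    simp only [Nat.add_sub_cancel]
    linarith [hassoc]
  have key : ∀ (k : ℕ) (u : List (Fin n)), u.length = k → u ≠ [] →
      convMul (gchar P f y) (ginv x) (emb u) =
        omGen (iterPara P) u.length (u.map f) y x := by
    intro k
    induction k using Nat.strong_induction_on with
    | _ k IH =>
      intro u hku hu
      obtain ⟨m, hm⟩ : ∃ m, u.length = m + 1 := by
        cases u with
        | nil => exact absurd rfl hu
        | cons a l => exact ⟨l.length, rfl⟩
      rw [hrec u hu, hm]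
      simp only [Nat.add_sub_cancel]
      rw [omGen]
      congr 1
      refine Finset.sum_congr rfl fun ℓ hℓ => ?_
      have hℓm : ℓ < m := Finset.mem_range.mp hℓ
      have hdne : u.drop (ℓ + 1) ≠ [] := by
        intro hnil
        have := congrArg List.length hnil
        simp [hm] at this
        omega
      have hdlen : (u.drop (ℓ + 1)).length = m - ℓ := by
        rw [List.length_drop, hm]; omega
      have hIH := IH (m - ℓ) (by omega) (u.drop (ℓ + 1)) hdlen hdne
      rw [hdlen] at hIH
      rw [hIH, List.map_take, List.map_drop]
  exact key w.length w rfl hw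

end
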